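/- (Main Theorem, case C = ∅, boundary strip) Under the same setup (positive run {(0,b): β₁≤b≤β₂} on the west boundary, all other boundary sites -1, no doubly-positive corner): for all n ≥ 2N and every site (a,b) with a=1 and β₁ ≤ b ≤ β₂, the estimate ô^n_{(a,b)} = -2, and this equals the true local solution o*_{(a,b)}. -/

import Mathlib

/-- Vertex set of the `(N+2) × (N+2)` grid graph: `{0, …, N+1}²`. -/
def gridV (N : ℕ) : Set (ℤ × ℤ) :=
  {p | 0 ≤ p.1 ∧ p.1 ≤ N + 1 ∧ 0 ≤ p.2 ∧ p.2 ≤ N + 1}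

/-- The interior `B = {1, …, N}²` of the grid. -/
def gridB (N : ℕ) : Set (ℤ × ℤ) :=
  {p | 1 ≤ p.1 ∧ p.1 ≤ N ∧ 1 ≤ p.2 ∧ p.2 ≤ N}

/-- The grid graph with the 4-neighbor topology. -/
def gridGraph (N : ℕ) : SimpleGraph (ℤ × ℤ) where
  Adj p q := p ∈ gridV N ∧ q ∈ gridV N ∧ |p.1 - q.1| + |p.2 - q.2| = 1
  symm := by
    constructor
    intro p q h
    refine ⟨h.2.1, h.1, ?_⟩
    rw [abs_sub_comm q.1, abs_sub_comm q.2]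
    exact h.2.2
  loopless := by
    constructor
    intro p h
    simp at h

/-- An edge is an odd bond for configuration `y` when its endpoints get different values. -/
def isOdd (y : ℤ × ℤ → ℤ) (e : Sym2 (ℤ × ℤ)) : Prop :=
  Sym2.lift ⟨fun u v => y u ≠ y v, fun u v => by simp [ne_comm]⟩ e

/-- Number of odd bonds on edges with at least one endpoint in the interior. -/
noncomputable def oddBonds (N : ℕ) (y : ℤ × ℤ → ℤ) : ℕ :=
  {e ∈ (gridGraph N).edgeSet | (∃ u ∈ e, u ∈ gridB N) ∧ isOdd y e}.ncard

/-- `y` is a valid configuration extending the boundary configuration `x`: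
it agrees with `x` off the interior and takes values in `{±1}` on the interior. -/
def isConfig (N : ℕ) (x y : ℤ × ℤ → ℤ) : Prop :=
  (∀ p, p ∉ gridB N → y p = x p) ∧ (∀ p ∈ gridB N, y p = 1 ∨ y p = -1)

/-- `O*_i(s, x)`: minimal number of odd bonds over configurations with `y i = s`. -/
noncomputable def Ostar (N : ℕ) (x : ℤ × ℤ → ℤ) (i : ℤ × ℤ) (s : ℤ) : ℕ :=
  sInf {n | ∃ y, isConfig N x y ∧ y i = s ∧ oddBonds N y = n}

/-- Minimal number of odd bonds over all configurations. -/
noncomputable def OstarGlobal (N : ℕ) (x : ℤ × ℤ → ℤ) : ℕ :=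
  sInf {n | ∃ y, isConfig N x y ∧ oddBonds N y = n}

/-- A global (MAP) solution. -/
def isGlobalSol (N : ℕ) (x y : ℤ × ℤ → ℤ) : Prop :=
  isConfig N x y ∧ oddBonds N y = OstarGlobal N x

/-- The boundary configuration takes values in `{±1}`. -/
def isBoundaryConfig (N : ℕ) (x : ℤ × ℤ → ℤ) : Prop :=
  ∀ p ∈ gridV N, p ∉ gridB N → x p = 1 ∨ x p = -1

/-- One-run boundary: the set `R⁺` of `+1` boundary sites induces a connected subgraph. -/
def oneRun (N : ℕ) (x : ℤ × ℤ → ℤ) : Prop :=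
  ((gridGraph N).induce {p | p ∈ gridV N ∧ p ∉ gridB N ∧ x p = 1}).Connected

/-- The four lattice neighbors of a point. -/
def nbrs (p : ℤ × ℤ) : Finset (ℤ × ℤ) :=
  {(p.1 + 1, p.2), (p.1 - 1, p.2), (p.1, p.2 + 1), (p.1, p.2 - 1)}

/-!
All messages are at most `1`, so an interior site sends `-1` as soon as two of the three
messages it combines are `-1`. Starting from the east, south and north boundaries, which are all
`-1`, this settles the east, south and north messages into `(1, b)` to `-1` within `2N` steps,
while the west message is the boundary value `+1`.

For the local solution, every configuration has an odd bond in each row `β₁ ≤ t ≤ β₂`, between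
`(0, t) = +1` and `(N + 1, t) = -1`; if moreover `(1, b) = +1`, column `1` has two more, below and
above `(1, b)`. The all-minus interior and its flip at `(1, b)` attain these two bounds.
-/

section Grid

variable {N : ℕ}

lemma mem_gridV {a b : ℤ} :
    (a, b) ∈ gridV N ↔ 0 ≤ a ∧ a ≤ N + 1 ∧ 0 ≤ b ∧ b ≤ N + 1 := Iff.rfl

lemma mem_gridB {a b : ℤ} :
    (a, b) ∈ gridB N ↔ 1 ≤ a ∧ a ≤ N ∧ 1 ≤ b ∧ b ≤ N := Iff.rfl

lemma mem_nbrs {a b c d : ℤ} :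
    (c, d) ∈ nbrs (a, b) ↔
      (c = a + 1 ∧ d = b) ∨ (c = a - 1 ∧ d = b) ∨ (c = a ∧ d = b + 1) ∨ (c = a ∧ d = b - 1) := by
  simp [nbrs]

lemma mem_nbrs_sdiff_singleton {a b c d e f : ℤ} :
    (c, d) ∈ nbrs (a, b) \ {(e, f)} ↔
      ((c = a + 1 ∧ d = b) ∨ (c = a - 1 ∧ d = b) ∨ (c = a ∧ d = b + 1) ∨ (c = a ∧ d = b - 1)) ∧
        ¬(c = e ∧ d = f) := by
  rw [Finset.mem_sdiff, Finset.mem_singleton, mem_nbrs, Prod.ext_iff]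

lemma mem_nbrs_comm {p q : ℤ × ℤ} : q ∈ nbrs p ↔ p ∈ nbrs q := by
  obtain ⟨a, b⟩ := p
  obtain ⟨c, d⟩ := q
  rw [mem_nbrs, mem_nbrs]
  omega

lemma mem_nbrs_iff_abs {p q : ℤ × ℤ} : q ∈ nbrs p ↔ |p.1 - q.1| + |p.2 - q.2| = 1 := by
  obtain ⟨a, b⟩ := p
  obtain ⟨c, d⟩ := q
  rw [mem_nbrs]
  rcases abs_cases (a - c) with ⟨h₁, _⟩ | ⟨h₁, _⟩ <;>
    rcases abs_cases (b - d) with ⟨h₂, _⟩ | ⟨h₂, _⟩ <;> simp only [h₁, h₂] <;> omega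

lemma card_nbrs (p : ℤ × ℤ) : (nbrs p).card = 4 := by
  obtain ⟨a, b⟩ := p
  rw [nbrs, Finset.card_insert_of_notMem, Finset.card_insert_of_notMem, Finset.card_pair] <;>
    simp <;> omega

lemma card_nbrs_erase {p q : ℤ × ℤ} (hq : q ∈ nbrs p) : ((nbrs p).erase q).card = 3 := by
  rw [Finset.card_erase_of_mem hq, card_nbrs]

lemma mem_gridV_of_mem_nbrs {p q : ℤ × ℤ} (hp : p ∈ gridB N) (hq : q ∈ nbrs p) :
    q ∈ gridV N := by
  obtain ⟨a, b⟩ := p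
  obtain ⟨c, d⟩ := q
  rw [mem_nbrs] at hq
  rw [mem_gridB] at hp
  rw [mem_gridV]
  omega

lemma gridGraph_adj {p q : ℤ × ℤ} :
    (gridGraph N).Adj p q ↔ p ∈ gridV N ∧ q ∈ gridV N ∧ q ∈ nbrs p := by
  rw [mem_nbrs_iff_abs]
  rfl

end Grid

lemma sum_neg_of_two_eq_neg_one {α : Type*} [DecidableEq α] {s : Finset α} {f : α → ℤ}
    (hs : s.card = 3) (hle : ∀ k ∈ s, f k ≤ 1) {k₁ k₂ : α} (hk₁ : k₁ ∈ s) (hk₂ : k₂ ∈ s)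
    (hk : k₁ ≠ k₂) (h₁ : f k₁ = -1) (h₂ : f k₂ = -1) : ∑ k ∈ s, f k < 0 := by
  have hk₂' : k₂ ∈ s.erase k₁ := Finset.mem_erase.2 ⟨hk.symm, hk₂⟩
  have hrest : ∑ k ∈ (s.erase k₁).erase k₂, f k ≤ 1 := by
    calc ∑ k ∈ (s.erase k₁).erase k₂, f k
        ≤ ∑ _k ∈ (s.erase k₁).erase k₂, (1 : ℤ) :=
          Finset.sum_le_sum fun k hk => hle k (Finset.mem_of_mem_erase (Finset.mem_of_mem_erase hk))
      _ = 1 := by simp [Finset.card_erase_of_mem hk₂', Finset.card_erase_of_mem hk₁, hs]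
  rw [← Finset.add_sum_erase s f hk₁, ← Finset.add_sum_erase _ f hk₂']
  omega

lemma exists_ne_succ_of_ne {α : Type*} {g : ℤ → α} {c d : ℤ} (hcd : c ≤ d) (h : g c ≠ g d) :
    ∃ k, c ≤ k ∧ k < d ∧ g k ≠ g (k + 1) := by
  by_contra! hcon
  have key : ∀ k, c ≤ k → k ≤ d → g c = g k := by
    intro k hk
    induction k, hk using Int.leInduction with
    | base => exact fun _ => rfl
    | succ k hck ih => exact fun hkd => (ih (by omega)).trans (hcon k hck (by omega))
  exact h (key d hcd le_rfl)

structure IsMessageRun (N : ℕ) (x : ℤ × ℤ → ℤ) (m : ℕ → ℤ × ℤ → ℤ × ℤ → ℤ) : Prop where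
  boundary : ∀ j ∈ gridV N, j ∉ gridB N → ∀ i ∈ nbrs j, ∀ n : ℕ, m n j i = x j
  init : ∀ j ∈ gridB N, ∀ i ∈ nbrs j, m 0 j i = 0
  update : ∀ j ∈ gridB N, ∀ i ∈ nbrs j, ∀ n : ℕ, 0 < n →
    m n j i = Int.sign (∑ k ∈ nbrs j \ {i}, m (n - 1) k j)

/-- Each deadline is the length of the chain of earlier messages the message depends on, back
to the `-1` east, south or north boundary. -/
def SettledAt (N : ℕ) (m : ℕ → ℤ × ℤ → ℤ × ℤ → ℤ) (n : ℕ) : Prop :=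
  ∀ a b : ℤ, (a, b) ∈ gridB N →
    (N - a - 1 + min b (N + 1 - b) ≤ n → m n (a + 1, b) (a, b) = -1) ∧
    (N - a + b - 1 ≤ n → m n (a, b - 1) (a, b) = -1) ∧
    (2 * N - a - b ≤ n → m n (a, b + 1) (a, b) = -1)

namespace IsMessageRun

variable {N : ℕ} {x : ℤ × ℤ → ℤ} {m : ℕ → ℤ × ℤ → ℤ × ℤ → ℤ}

lemma le_one (hm : IsMessageRun N x m) (hx : ∀ j ∈ gridV N, j ∉ gridB N → x j ≤ 1)
    {n : ℕ} {j i : ℤ × ℤ} (hj : j ∈ gridV N) (hi : i ∈ nbrs j) : m n j i ≤ 1 := by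
  by_cases hjB : j ∈ gridB N
  · cases n with
    | zero => simp [hm.init j hjB i hi]
    | succ n =>
      rw [hm.update j hjB i hi _ (by omega), Nat.add_sub_cancel]
      obtain h | h | h := Int.sign_trichotomy (∑ k ∈ nbrs j \ {i}, m n k j) <;> omega
  · rw [hm.boundary j hj hjB i hi]
    exact hx j hj hjB

lemma eq_neg_one_of_two (hm : IsMessageRun N x m) (hx : ∀ j ∈ gridV N, j ∉ gridB N → x j ≤ 1)
    {n : ℕ} {j i k₁ k₂ : ℤ × ℤ} (hj : j ∈ gridB N) (hi : i ∈ nbrs j)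
    (hk₁ : k₁ ∈ nbrs j \ {i}) (hk₂ : k₂ ∈ nbrs j \ {i}) (hk : k₁ ≠ k₂)
    (h₁ : m n k₁ j = -1) (h₂ : m n k₂ j = -1) : m (n + 1) j i = -1 := by
  rw [hm.update j hj i hi _ (by omega), Nat.add_sub_cancel]
  refine Int.sign_eq_neg_one_of_neg (sum_neg_of_two_eq_neg_one ?_ ?_ hk₁ hk₂ hk h₁ h₂)
  · rw [Finset.sdiff_singleton_eq_erase, card_nbrs_erase hi]
  · intro k hk
    have hkj := (Finset.mem_sdiff.1 hk).1
    exact hm.le_one hx (mem_gridV_of_mem_nbrs hj hkj) (mem_nbrs_comm.1 hkj)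

lemma eq_neg_one_of_boundary (hm : IsMessageRun N x m)
    (hxw : ∀ j ∈ gridV N, j ∉ gridB N → j.1 ≠ 0 → x j = -1) {n : ℕ} {j i : ℤ × ℤ}
    (hj : j ∈ gridV N) (hjB : j ∉ gridB N) (hj0 : j.1 ≠ 0) (hi : i ∈ nbrs j) : m n j i = -1 := by
  rw [hm.boundary j hj hjB i hi n, hxw j hj hjB hj0]

lemma msg_from_east (hm : IsMessageRun N x m) (hx : ∀ j ∈ gridV N, j ∉ gridB N → x j ≤ 1)
    (hxw : ∀ j ∈ gridV N, j ∉ gridB N → j.1 ≠ 0 → x j = -1) {n : ℕ}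
    (ih : ∀ n' < n, SettledAt N m n') {a b : ℤ} (hab : (a, b) ∈ gridB N)
    (hn : N - a - 1 + min b (N + 1 - b) ≤ n) : m n (a + 1, b) (a, b) = -1 := by
  rw [mem_gridB] at hab
  by_cases ha : a = N
  · exact hm.eq_neg_one_of_boundary hxw (by rw [mem_gridV]; omega) (by rw [mem_gridB]; omega)
      (by dsimp only; omega) (by rw [mem_nbrs]; omega)
  obtain ⟨n', rfl⟩ : ∃ n', n = n' + 1 := ⟨n - 1, by omega⟩
  have hs := ih n' (by omega) (a + 1) b (by rw [mem_gridB]; omega)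
  have hj : (a + 1, b) ∈ gridB N := by rw [mem_gridB]; omega
  -- the westward message needs the nearer of the south and north boundaries
  rcases le_total b (N + 1 - b) with hb | hb
  · exact hm.eq_neg_one_of_two hx hj (by rw [mem_nbrs]; omega)
      (by rw [mem_nbrs_sdiff_singleton]; omega) (by rw [mem_nbrs_sdiff_singleton]; omega)
      (by simp [Prod.ext_iff]) (hs.1 (by omega)) (hs.2.1 (by omega))
  · exact hm.eq_neg_one_of_two hx hj (by rw [mem_nbrs]; omega)
      (by rw [mem_nbrs_sdiff_singleton]; omega) (by rw [mem_nbrs_sdiff_singleton]; omega)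
      (by simp [Prod.ext_iff]) (hs.1 (by omega)) (hs.2.2 (by omega))

lemma msg_from_south (hm : IsMessageRun N x m) (hx : ∀ j ∈ gridV N, j ∉ gridB N → x j ≤ 1)
    (hxw : ∀ j ∈ gridV N, j ∉ gridB N → j.1 ≠ 0 → x j = -1) {n : ℕ}
    (ih : ∀ n' < n, SettledAt N m n') {a b : ℤ} (hab : (a, b) ∈ gridB N)
    (hn : N - a + b - 1 ≤ n) : m n (a, b - 1) (a, b) = -1 := by
  rw [mem_gridB] at hab
  by_cases hb : b = 1
  · exact hm.eq_neg_one_of_boundary hxw (by rw [mem_gridV]; omega) (by rw [mem_gridB]; omega)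
      (by dsimp only; omega) (by rw [mem_nbrs]; omega)
  obtain ⟨n', rfl⟩ : ∃ n', n = n' + 1 := ⟨n - 1, by omega⟩
  have hs := ih n' (by omega) a (b - 1) (by rw [mem_gridB]; omega)
  exact hm.eq_neg_one_of_two hx (by rw [mem_gridB]; omega) (by rw [mem_nbrs]; omega)
    (by rw [mem_nbrs_sdiff_singleton]; omega) (by rw [mem_nbrs_sdiff_singleton]; omega)
    (by simp [Prod.ext_iff]) (hs.1 (by omega)) (hs.2.1 (by omega))

lemma msg_from_north (hm : IsMessageRun N x m) (hx : ∀ j ∈ gridV N, j ∉ gridB N → x j ≤ 1)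
    (hxw : ∀ j ∈ gridV N, j ∉ gridB N → j.1 ≠ 0 → x j = -1) {n : ℕ}
    (ih : ∀ n' < n, SettledAt N m n') {a b : ℤ} (hab : (a, b) ∈ gridB N)
    (hn : 2 * N - a - b ≤ n) : m n (a, b + 1) (a, b) = -1 := by
  rw [mem_gridB] at hab
  by_cases hb : b = N
  · exact hm.eq_neg_one_of_boundary hxw (by rw [mem_gridV]; omega) (by rw [mem_gridB]; omega)
      (by dsimp only; omega) (by rw [mem_nbrs]; omega)
  obtain ⟨n', rfl⟩ : ∃ n', n = n' + 1 := ⟨n - 1, by omega⟩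
  have hs := ih n' (by omega) a (b + 1) (by rw [mem_gridB]; omega)
  exact hm.eq_neg_one_of_two hx (by rw [mem_gridB]; omega) (by rw [mem_nbrs]; omega)
    (by rw [mem_nbrs_sdiff_singleton]; omega) (by rw [mem_nbrs_sdiff_singleton]; omega)
    (by simp [Prod.ext_iff]) (hs.1 (by omega)) (hs.2.2 (by omega))

lemma settledAt (hm : IsMessageRun N x m) (hx : ∀ j ∈ gridV N, j ∉ gridB N → x j ≤ 1)
    (hxw : ∀ j ∈ gridV N, j ∉ gridB N → j.1 ≠ 0 → x j = -1) (n : ℕ) : SettledAt N m n := by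
  induction n using Nat.strong_induction_on with
  | _ n ih =>
    exact fun a b hab => ⟨hm.msg_from_east hx hxw ih hab, hm.msg_from_south hx hxw ih hab,
      hm.msg_from_north hx hxw ih hab⟩

end IsMessageRun

def IsWestRunBoundary (N : ℕ) (β₁ β₂ : ℤ) (x : ℤ × ℤ → ℤ) : Prop :=
  ∀ p ∈ gridV N, p ∉ gridB N → x p = if p.1 = 0 ∧ p.2 ∈ Set.Icc β₁ β₂ then 1 else -1

lemma isWestRunBoundary_of {N : ℕ} {β₁ β₂ : ℤ} {x : ℤ × ℤ → ℤ} (hxpm : isBoundaryConfig N x)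
    (hx1 : ∀ p ∈ gridV N, p ∉ gridB N → (x p = 1 ↔ (p.1 = 0 ∧ β₁ ≤ p.2 ∧ p.2 ≤ β₂))) :
    IsWestRunBoundary N β₁ β₂ x := by
  intro p hp hpB
  split_ifs with h
  · exact (hx1 p hp hpB).2 h
  · exact (hxpm p hp hpB).resolve_left fun h1 => h ((hx1 p hp hpB).1 h1)

namespace IsWestRunBoundary

variable {N : ℕ} {β₁ β₂ : ℤ} {x : ℤ × ℤ → ℤ}

lemma le_one (hx : IsWestRunBoundary N β₁ β₂ x) :
    ∀ p ∈ gridV N, p ∉ gridB N → x p ≤ 1 := by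
  intro p hp hpB
  rw [hx p hp hpB]
  split_ifs <;> norm_num

lemma eq_neg_one_of_fst_ne_zero (hx : IsWestRunBoundary N β₁ β₂ x) :
    ∀ p ∈ gridV N, p ∉ gridB N → p.1 ≠ 0 → x p = -1 := by
  intro p hp hpB h0
  rw [hx p hp hpB, if_neg fun h => h0 h.1]

lemma eq_one (hx : IsWestRunBoundary N β₁ β₂ x) {t : ℤ} (hp : ((0 : ℤ), t) ∈ gridV N)
    (ht : t ∈ Set.Icc β₁ β₂) : x (0, t) = 1 := by
  rw [hx _ hp (by rw [mem_gridB]; omega), if_pos ⟨rfl, ht⟩]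

end IsWestRunBoundary

section OddBonds

variable {N : ℕ} {y : ℤ × ℤ → ℤ}

def oddSet (N : ℕ) (y : ℤ × ℤ → ℤ) : Set (Sym2 (ℤ × ℤ)) :=
  {e ∈ (gridGraph N).edgeSet | (∃ u ∈ e, u ∈ gridB N) ∧ isOdd y e}

lemma oddBonds_eq_ncard_oddSet : oddBonds N y = (oddSet N y).ncard := rfl

lemma mem_oddSet {u v : ℤ × ℤ} :
    s(u, v) ∈ oddSet N y ↔ (gridGraph N).Adj u v ∧ (u ∈ gridB N ∨ v ∈ gridB N) ∧ y u ≠ y v := by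
  simp only [oddSet, isOdd, Set.mem_ofPred_eq, SimpleGraph.mem_edgeSet, Sym2.lift_mk,
    Sym2.mem_iff, exists_eq_or_imp, exists_eq_left]

lemma gridV_finite (N : ℕ) : (gridV N).Finite :=
  ((Set.finite_Icc (0 : ℤ) (N + 1)).prod (Set.finite_Icc (0 : ℤ) (N + 1))).subset
    fun _ hp => ⟨⟨hp.1, hp.2.1⟩, ⟨hp.2.2.1, hp.2.2.2⟩⟩

lemma oddSet_finite : (oddSet N y).Finite := by
  refine (((gridV_finite N).prod (gridV_finite N)).image fun p => s(p.1, p.2)).subset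
    fun e he => ?_
  induction e using Sym2.inductionOn with
  | _ u v =>
    have hadj := gridGraph_adj.1 (mem_oddSet.1 he).1
    exact ⟨(u, v), ⟨hadj.1, hadj.2.1⟩, rfl⟩

lemma exists_oriented_of_mem_oddSet (hy : ∀ p ∈ gridV N, y p = 1 ∨ y p = -1)
    {e : Sym2 (ℤ × ℤ)} (he : e ∈ oddSet N y) :
    ∃ w z, e = s(w, z) ∧ (gridGraph N).Adj w z ∧ (w ∈ gridB N ∨ z ∈ gridB N) ∧
      y w = 1 ∧ y z = -1 := by
  induction e using Sym2.inductionOn with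
  | _ u v =>
    obtain ⟨hadj, hB, hne⟩ := mem_oddSet.1 he
    have hu := hy u (gridGraph_adj.1 hadj).1
    have hv := hy v (gridGraph_adj.1 hadj).2.1
    rcases hu with hu | hu <;> rcases hv with hv | hv
    · exact absurd (hu.trans hv.symm) hne
    · exact ⟨u, v, rfl, hadj, hB, hu, hv⟩
    · exact ⟨v, u, Sym2.eq_swap, hadj.symm, hB.symm, hv, hu⟩
    · exact absurd (hu.trans hv.symm) hne

def hEdge (k t : ℤ) : Sym2 (ℤ × ℤ) := s((k, t), (k + 1, t))

def vEdge (a k : ℤ) : Sym2 (ℤ × ℤ) := s((a, k), (a, k + 1))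

lemma hEdge_ne_vEdge (k t a l : ℤ) : hEdge k t ≠ vEdge a l := by
  simp only [hEdge, vEdge, ne_eq, Sym2.eq_iff, Prod.mk.injEq]
  omega

lemma exists_hEdge_mem_oddSet {c d t : ℤ} (hc : 0 ≤ c) (hcd : c ≤ d) (hd : d ≤ N + 1)
    (ht : 1 ≤ t) (htN : t ≤ N) (hne : y (c, t) ≠ y (d, t)) :
    ∃ k, c ≤ k ∧ k < d ∧ hEdge k t ∈ oddSet N y := by
  obtain ⟨k, hck, hkd, hk⟩ := exists_ne_succ_of_ne (g := fun k => y (k, t)) hcd hne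
  refine ⟨k, hck, hkd, mem_oddSet.2 ⟨gridGraph_adj.2 ⟨?_, ?_, ?_⟩, ?_, hk⟩⟩
  · rw [mem_gridV]; omega
  · rw [mem_gridV]; omega
  · rw [mem_nbrs]; omega
  · rw [mem_gridB, mem_gridB]; omega

lemma exists_vEdge_mem_oddSet {a c d : ℤ} (hc : 0 ≤ c) (hcd : c ≤ d) (hd : d ≤ N + 1)
    (ha : 1 ≤ a) (haN : a ≤ N) (hne : y (a, c) ≠ y (a, d)) :
    ∃ k, c ≤ k ∧ k < d ∧ vEdge a k ∈ oddSet N y := by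
  obtain ⟨k, hck, hkd, hk⟩ := exists_ne_succ_of_ne (g := fun k => y (a, k)) hcd hne
  refine ⟨k, hck, hkd, mem_oddSet.2 ⟨gridGraph_adj.2 ⟨?_, ?_, ?_⟩, ?_, hk⟩⟩
  · rw [mem_gridV]; omega
  · rw [mem_gridV]; omega
  · rw [mem_nbrs]; omega
  · rw [mem_gridB, mem_gridB]; omega

end OddBonds

section Bounds

variable {N : ℕ} {β₁ β₂ : ℤ} {x y : ℤ × ℤ → ℤ}

lemma exists_hEdge_mem_oddSet_in_each_row (hx : IsWestRunBoundary N β₁ β₂ x) (hβ₁ : 1 ≤ β₁)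
    (hβ₂ : β₂ ≤ N) (hy : isConfig N x y) :
    ∃ k : ℤ → ℤ, ∀ t ∈ Set.Icc β₁ β₂, hEdge (k t) t ∈ oddSet N y := by
  have hrow : ∀ t, ∃ k, t ∈ Set.Icc β₁ β₂ → hEdge k t ∈ oddSet N y := by
    intro t
    by_cases ht : t ∈ Set.Icc β₁ β₂
    · obtain ⟨ht₁, ht₂⟩ := ht
      have hw : y (0, t) = 1 := by
        rw [hy.1 _ (by rw [mem_gridB]; omega)]
        exact hx.eq_one (by rw [mem_gridV]; omega) ⟨ht₁, ht₂⟩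
      have he : y (N + 1, t) = -1 := by
        rw [hy.1 _ (by rw [mem_gridB]; omega)]
        exact hx.eq_neg_one_of_fst_ne_zero _ (by rw [mem_gridV]; omega)
          (by rw [mem_gridB]; omega) (by dsimp only; omega)
      obtain ⟨k, -, -, hk⟩ := exists_hEdge_mem_oddSet (y := y) (c := 0) (d := N + 1) (t := t) le_rfl (by omega)
        le_rfl (by omega) (by omega) (by rw [hw, he]; norm_num)
      exact ⟨k, fun _ => hk⟩
    · exact ⟨0, fun h => absurd h ht⟩
  choose k hk using hrow
  exact ⟨k, hk⟩

lemma ncard_image_hEdge (k : ℤ → ℤ) (s : Set ℤ) :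
    ((fun t => hEdge (k t) t) '' s).ncard = s.ncard := by
  refine Set.ncard_image_of_injective s fun t t' h => ?_
  simp only [hEdge, Sym2.eq_iff, Prod.mk.injEq] at h
  omega

lemma ncard_Icc_le_oddBonds (hx : IsWestRunBoundary N β₁ β₂ x) (hβ₁ : 1 ≤ β₁)
    (hβ₂ : β₂ ≤ N) (hy : isConfig N x y) : (Set.Icc β₁ β₂).ncard ≤ oddBonds N y := by
  obtain ⟨k, hk⟩ := exists_hEdge_mem_oddSet_in_each_row hx hβ₁ hβ₂ hy
  rw [← ncard_image_hEdge k, oddBonds_eq_ncard_oddSet]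
  exact Set.ncard_le_ncard (Set.image_subset_iff.2 hk) oddSet_finite

lemma ncard_Icc_add_two_le_oddBonds (hx : IsWestRunBoundary N β₁ β₂ x) (hβ₁ : 1 ≤ β₁)
    (hβ₂ : β₂ ≤ N) {b : ℤ} (hb : b ∈ Set.Icc β₁ β₂) (hy : isConfig N x y) (hyb : y (1, b) = 1) :
    (Set.Icc β₁ β₂).ncard + 2 ≤ oddBonds N y := by
  obtain ⟨k, hk⟩ := exists_hEdge_mem_oddSet_in_each_row hx hβ₁ hβ₂ hy
  obtain ⟨hb₁, hb₂⟩ := hb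
  have hcol : ∀ c : ℤ, (c = 0 ∨ c = N + 1) → y (1, c) = -1 := by
    rintro c hc
    rw [hy.1 _ (by rw [mem_gridB]; omega)]
    exact hx.eq_neg_one_of_fst_ne_zero _ (by rw [mem_gridV]; omega) (by rw [mem_gridB]; omega)
      (by dsimp only; omega)
  obtain ⟨k₁, -, hk₁, hv₁⟩ := exists_vEdge_mem_oddSet (N := N) (y := y) (a := 1) (c := 0) (d := b) le_rfl
    (by omega) (by omega) le_rfl (by omega) (by rw [hcol 0 (by omega), hyb]; norm_num)
  obtain ⟨k₂, hk₂, -, hv₂⟩ := exists_vEdge_mem_oddSet (y := y) (a := 1) (c := b) (d := N + 1) (by omega)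
    (by omega) le_rfl le_rfl (by omega) (by rw [hcol (N + 1) (by omega), hyb]; norm_num)
  have hdisj : Disjoint ((fun t => hEdge (k t) t) '' Set.Icc β₁ β₂) {vEdge 1 k₁, vEdge 1 k₂} := by
    rw [Set.disjoint_left]
    rintro _ ⟨t, -, rfl⟩ hv
    rcases hv with hv | hv <;> exact hEdge_ne_vEdge _ _ _ _ hv
  have hne : vEdge 1 k₁ ≠ vEdge 1 k₂ := by
    simp only [vEdge, ne_eq, Sym2.eq_iff, Prod.mk.injEq]
    omega
  rw [← ncard_image_hEdge k, ← Set.ncard_pair hne, ← Set.ncard_union_eq hdisj,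
    oddBonds_eq_ncard_oddSet]
  exact Set.ncard_le_ncard (Set.union_subset (Set.image_subset_iff.2 hk)
    (Set.pair_subset hv₁ hv₂)) oddSet_finite

end Bounds

section Competitors

variable {N : ℕ} {β₁ β₂ : ℤ} {x : ℤ × ℤ → ℤ} {S : Set (ℤ × ℤ)}

open Classical in
noncomputable def fillWith (N : ℕ) (x : ℤ × ℤ → ℤ) (S : Set (ℤ × ℤ)) : ℤ × ℤ → ℤ :=
  fun p => if p ∈ gridB N then (if p ∈ S then 1 else -1) else x p

lemma fillWith_of_mem {p : ℤ × ℤ} (hp : p ∈ gridB N) (hS : p ∈ S) : fillWith N x S p = 1 := by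
  simp [fillWith, hp, hS]

lemma fillWith_of_notMem {p : ℤ × ℤ} (hp : p ∈ gridB N) (hS : p ∉ S) :
    fillWith N x S p = -1 := by
  simp [fillWith, hp, hS]

lemma fillWith_of_notMem_gridB {p : ℤ × ℤ} (hp : p ∉ gridB N) : fillWith N x S p = x p := by
  simp [fillWith, hp]

lemma isConfig_fillWith : isConfig N x (fillWith N x S) := by
  refine ⟨fun p hp => fillWith_of_notMem_gridB hp, fun p hp => ?_⟩
  by_cases hS : p ∈ S
  exacts [Or.inl (fillWith_of_mem hp hS), Or.inr (fillWith_of_notMem hp hS)]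

lemma fillWith_eq_one_or (hx : IsWestRunBoundary N β₁ β₂ x) {p : ℤ × ℤ} (hp : p ∈ gridV N) :
    fillWith N x S p = 1 ∨ fillWith N x S p = -1 := by
  by_cases hpB : p ∈ gridB N
  · exact isConfig_fillWith.2 p hpB
  · rw [fillWith_of_notMem_gridB hpB, hx p hp hpB]
    split_ifs <;> simp

lemma mem_or_of_fillWith_eq_one (hx : IsWestRunBoundary N β₁ β₂ x) {p : ℤ × ℤ}
    (hp : p ∈ gridV N) (h : fillWith N x S p = 1) : p ∈ S ∨ (p.1 = 0 ∧ p.2 ∈ Set.Icc β₁ β₂) := by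
  by_cases hpB : p ∈ gridB N
  · by_contra hS
    rw [fillWith_of_notMem hpB fun h' => hS (Or.inl h')] at h
    norm_num at h
  · rw [fillWith_of_notMem_gridB hpB, hx p hp hpB] at h
    split_ifs at h with h'
    exact Or.inr h'

lemma eq_hEdge_of_adj_west {t : ℤ} {z : ℤ × ℤ} (hadj : (gridGraph N).Adj (0, t) z)
    (hB : ((0 : ℤ), t) ∈ gridB N ∨ z ∈ gridB N) : z = (1, t) ∧ s((0, t), z) = hEdge 0 t := by
  obtain ⟨c, d⟩ := z
  obtain ⟨-, -, hz⟩ := gridGraph_adj.1 hadj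
  rw [mem_nbrs] at hz
  rw [mem_gridB, mem_gridB] at hB
  obtain ⟨rfl, rfl⟩ : c = 1 ∧ d = t := by omega
  exact ⟨rfl, by simp [hEdge]⟩

lemma oddSet_fillWith_empty_subset (hx : IsWestRunBoundary N β₁ β₂ x) :
    oddSet N (fillWith N x ∅) ⊆ hEdge 0 '' Set.Icc β₁ β₂ := by
  intro e he
  obtain ⟨⟨a, t⟩, z, rfl, hadj, hB, hw, -⟩ :=
    exists_oriented_of_mem_oddSet (fun p hp => fillWith_eq_one_or hx hp) he
  rcases mem_or_of_fillWith_eq_one hx (gridGraph_adj.1 hadj).1 hw with h | ⟨rfl, ht⟩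
  · exact absurd h (Set.notMem_empty _)
  · exact ⟨t, ht, (eq_hEdge_of_adj_west hadj hB).2.symm⟩

lemma oddSet_fillWith_single_subset (hx : IsWestRunBoundary N β₁ β₂ x) (hβ₁ : 1 ≤ β₁)
    (hβ₂ : β₂ ≤ N) {b : ℤ} (hb : b ∈ Set.Icc β₁ β₂) :
    oddSet N (fillWith N x {(1, b)}) ⊆ hEdge 0 '' (Set.Icc β₁ β₂ \ {b}) ∪
      ↑(((nbrs (1, b)).erase (0, b)).image fun z => s((1, b), z)) := by
  obtain ⟨hb₁, hb₂⟩ := hb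
  have hq : fillWith N x {(1, b)} (1, b) = 1 :=
    fillWith_of_mem (by rw [mem_gridB]; omega) rfl
  intro e he
  obtain ⟨w, z, rfl, hadj, hB, hw, hz⟩ :=
    exists_oriented_of_mem_oddSet (fun p hp => fillWith_eq_one_or hx hp) he
  rcases mem_or_of_fillWith_eq_one hx (gridGraph_adj.1 hadj).1 hw with rfl | ⟨hw0, ht⟩
  · refine Or.inr (Finset.mem_coe.2 (Finset.mem_image.2 ⟨z, Finset.mem_erase.2 ⟨?_, ?_⟩, rfl⟩))
    · rintro rfl
      rw [fillWith_of_notMem_gridB (by rw [mem_gridB]; omega),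
        hx.eq_one (by rw [mem_gridV]; omega) ⟨hb₁, hb₂⟩] at hz
      norm_num at hz
    · exact (gridGraph_adj.1 hadj).2.2
  · obtain ⟨a, t⟩ := w
    obtain rfl : a = 0 := hw0
    obtain ⟨rfl, he⟩ := eq_hEdge_of_adj_west hadj hB
    refine Or.inl ⟨t, ⟨ht, fun htb => ?_⟩, he.symm⟩
    rw [Set.mem_singleton_iff.1 htb, hq] at hz
    norm_num at hz

lemma oddBonds_fillWith_empty_le (hx : IsWestRunBoundary N β₁ β₂ x) :
    oddBonds N (fillWith N x ∅) ≤ (Set.Icc β₁ β₂).ncard :=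
  (Set.ncard_le_ncard (oddSet_fillWith_empty_subset hx) ((Set.finite_Icc _ _).image _)).trans
    (Set.ncard_image_le (Set.finite_Icc _ _))

lemma oddBonds_fillWith_single_le (hx : IsWestRunBoundary N β₁ β₂ x) (hβ₁ : 1 ≤ β₁)
    (hβ₂ : β₂ ≤ N) {b : ℤ} (hb : b ∈ Set.Icc β₁ β₂) :
    oddBonds N (fillWith N x {(1, b)}) ≤ (Set.Icc β₁ β₂).ncard + 2 := by
  have hpos : 0 < (Set.Icc β₁ β₂).ncard := Set.ncard_pos (Set.finite_Icc _ _) |>.2 ⟨b, hb⟩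
  calc oddBonds N (fillWith N x {(1, b)})
      ≤ (hEdge 0 '' (Set.Icc β₁ β₂ \ {b})).ncard +
          (((nbrs (1, b)).erase (0, b)).image fun z => s((1, b), z)).card := by
        rw [oddBonds_eq_ncard_oddSet, ← Set.ncard_coe_finset]
        exact (Set.ncard_le_ncard (oddSet_fillWith_single_subset hx hβ₁ hβ₂ hb)
          (((Set.finite_Icc _ _).sdiff).image _ |>.union (Finset.finite_toSet _))).trans
          (Set.ncard_union_le _ _)
    _ ≤ ((Set.Icc β₁ β₂).ncard - 1) + 3 := by
        gcongr
        · rw [← Set.ncard_sdiff_singleton_of_mem hb]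
          exact Set.ncard_image_le (Set.finite_Icc _ _).sdiff
        · rw [← card_nbrs_erase (p := (1, b)) (q := (0, b)) (by rw [mem_nbrs]; omega)]
          exact Finset.card_image_le
    _ = (Set.Icc β₁ β₂).ncard + 2 := by omega

end Competitors

section LocalSolution

variable {N : ℕ} {β₁ β₂ : ℤ} {x : ℤ × ℤ → ℤ}

lemma Ostar_eq_of_le {i : ℤ × ℤ} {s : ℤ} {k : ℕ} {y : ℤ × ℤ → ℤ} (hy : isConfig N x y)
    (hyi : y i = s) (hyk : oddBonds N y ≤ k)
    (hk : ∀ y', isConfig N x y' → y' i = s → k ≤ oddBonds N y') : Ostar N x i s = k := by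
  unfold Ostar
  apply le_antisymm
  · refine (Nat.sInf_le ?_).trans hyk
    exact ⟨y, hy, hyi, rfl⟩
  · refine le_csInf ⟨_, y, hy, hyi, rfl⟩ ?_
    rintro _ ⟨y', hy', hy'i, rfl⟩
    exact hk y' hy' hy'i

lemma Ostar_neg_one (hx : IsWestRunBoundary N β₁ β₂ x) (hβ₁ : 1 ≤ β₁) (hβ₂ : β₂ ≤ N) {b : ℤ}
    (hb : b ∈ Set.Icc β₁ β₂) : Ostar N x (1, b) (-1) = (Set.Icc β₁ β₂).ncard := by
  have hbB : ((1 : ℤ), b) ∈ gridB N := by obtain ⟨_, _⟩ := hb; rw [mem_gridB]; omega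
  exact Ostar_eq_of_le isConfig_fillWith (fillWith_of_notMem hbB (Set.notMem_empty _))
    (oddBonds_fillWith_empty_le hx) fun _ hy _ => ncard_Icc_le_oddBonds hx hβ₁ hβ₂ hy

lemma Ostar_one (hx : IsWestRunBoundary N β₁ β₂ x) (hβ₁ : 1 ≤ β₁) (hβ₂ : β₂ ≤ N) {b : ℤ}
    (hb : b ∈ Set.Icc β₁ β₂) : Ostar N x (1, b) 1 = (Set.Icc β₁ β₂).ncard + 2 := by
  have hbB : ((1 : ℤ), b) ∈ gridB N := by obtain ⟨_, _⟩ := hb; rw [mem_gridB]; omega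
  exact Ostar_eq_of_le isConfig_fillWith (fillWith_of_mem hbB (Set.mem_singleton _))
    (oddBonds_fillWith_single_le hx hβ₁ hβ₂ hb) fun _ hy hyb =>
      ncard_Icc_add_two_le_oddBonds hx hβ₁ hβ₂ hb hy hyb

end LocalSolution

theorem main_caseC0_boundary_strip_general
    (N : ℕ) (β₁ β₂ : ℤ) (hβ₁ : 1 ≤ β₁) (hβ₂ : β₂ ≤ N)
    (x : ℤ × ℤ → ℤ) (hxpm : isBoundaryConfig N x)
    (hx1 : ∀ p ∈ gridV N, p ∉ gridB N →
      (x p = 1 ↔ (p.1 = 0 ∧ β₁ ≤ p.2 ∧ p.2 ≤ β₂)))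
    (m : ℕ → (ℤ × ℤ) → (ℤ × ℤ) → ℤ)
    -- boundary condition: boundary senders always send their boundary value
    (hbd : ∀ j ∈ gridV N, j ∉ gridB N → ∀ i ∈ nbrs j, ∀ n : ℕ, m n j i = x j)
    -- initialization: interior senders start at 0
    (h0 : ∀ j ∈ gridB N, ∀ i ∈ nbrs j, m 0 j i = 0)
    -- sign update for interior senders
    (hup : ∀ j ∈ gridB N, ∀ i ∈ nbrs j, ∀ n : ℕ, 0 < n →
      m n j i = Int.sign (∑ k ∈ nbrs j \ {i}, m (n-1) k j))
    :
    ∀ n : ℕ, 2 * N ≤ n → ∀ b : ℤ, β₁ ≤ b → b ≤ β₂ →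
      (m n (0, b) (1, b) + m n (1, b - 1) (1, b) +
        m n (2, b) (1, b) + m n (1, b + 1) (1, b) = -2) ∧
      ((Ostar N x (1, b) (-1) : ℤ) - (Ostar N x (1, b) 1 : ℤ) = -2) := by
  intro n hn b hb₁ hb₂
  have hb : b ∈ Set.Icc β₁ β₂ := ⟨hb₁, hb₂⟩
  have hx : IsWestRunBoundary N β₁ β₂ x := isWestRunBoundary_of hxpm hx1
  have hm : IsMessageRun N x m := ⟨hbd, h0, hup⟩
  obtain ⟨hE, hS, hN⟩ := hm.settledAt hx.le_one hx.eq_neg_one_of_fst_ne_zero n 1 b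
    (by rw [mem_gridB]; omega)
  have hW : m n (0, b) (1, b) = 1 := by
    rw [hbd _ (by rw [mem_gridV]; omega) (by rw [mem_gridB]; omega) _ (by rw [mem_nbrs]; omega)]
    exact hx.eq_one (by rw [mem_gridV]; omega) hb
  have hE' : m n (2, b) (1, b) = -1 := hE (by omega)
  refine ⟨?_, ?_⟩
  · rw [hW, hS (by omega), hE', hN (by omega)]
    norm_num
  · rw [Ostar_neg_one hx hβ₁ hβ₂ hb, Ostar_one hx hβ₁ hβ₂ hb]
    push_cast
    ring

/-- Main theorem, case `C = ∅`, boundary strip: with the positive run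
`{(0,b) : β₁ ≤ b ≤ β₂}` on the west boundary and all other boundary sites `-1`, for
all `n ≥ 2N` the estimate at every site `(1,b)` with `β₁ ≤ b ≤ β₂` equals `-2`, and
this equals the true local solution there. -/
theorem main_caseC0_boundary_strip
    (N : ℕ) (hN : 1 ≤ N) (β₁ β₂ : ℤ) (hβ₁ : 1 ≤ β₁) (hββ : β₁ ≤ β₂) (hβ₂ : β₂ ≤ N)
    (x : ℤ × ℤ → ℤ) (hxpm : isBoundaryConfig N x)
    (hx1 : ∀ p ∈ gridV N, p ∉ gridB N →
      (x p = 1 ↔ (p.1 = 0 ∧ β₁ ≤ p.2 ∧ p.2 ≤ β₂)))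
    (m : ℕ → (ℤ × ℤ) → (ℤ × ℤ) → ℤ)
    -- boundary condition: boundary senders always send their boundary value
    (hbd : ∀ j ∈ gridV N, j ∉ gridB N → ∀ i ∈ nbrs j, ∀ n : ℕ, m n j i = x j)
    -- initialization: interior senders start at 0
    (h0 : ∀ j ∈ gridB N, ∀ i ∈ nbrs j, m 0 j i = 0)
    -- sign update for interior senders
    (hup : ∀ j ∈ gridB N, ∀ i ∈ nbrs j, ∀ n : ℕ, 0 < n →
      m n j i = Int.sign (∑ k ∈ nbrs j \ {i}, m (n-1) k j))
    :
    ∀ n : ℕ, 2 * N ≤ n → ∀ b : ℤ, β₁ ≤ b → b ≤ β₂ →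
      (m n (0, b) (1, b) + m n (1, b - 1) (1, b) +
        m n (2, b) (1, b) + m n (1, b + 1) (1, b) = -2) ∧
      ((Ostar N x (1, b) (-1) : ℤ) - (Ostar N x (1, b) 1 : ℤ) = -2) :=
  main_caseC0_boundary_strip_general N β₁ β₂ hβ₁ hβ₂ x hxpm hx1 m hbd h0 hup
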